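/- Let (A, α) be a unital C*-algebra with α a *-automorphism satisfying α² = id, and let φ : A → L(H₁) be an α-completely positive map on a Krein B-module (H₁, J₁). On the algebraic tensor product A ⊗ H₁, the sesquilinear form defined by ⟨a ⊗ ξ, b ⊗ η⟩ := ⟨ξ, φ(α(a)* b) η⟩ is positive semidefinite, i.e., for all n, a₁,…,aₙ ∈ A and ξ₁,…,ξₙ ∈ H₁, the element Σᵢ Σⱼ ⟨ξᵢ, φ(α(aᵢ)* aⱼ) ξⱼ⟩ of B is positive; consequently N_φ := {Σ aᵢ ⊗ ξᵢ : Σᵢ Σⱼ ⟨ξᵢ, φ(α(aᵢ)* aⱼ) ξⱼ⟩ = 0} is a linear subspace and the quotient carries a B-valued inner product. -/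

import Mathlib

/-- The Hilbert C⋆-module class as Mathlib defined `CStarModule` in December 2024:
a right `A`-module (action of `Aᵐᵒᵖ`) with an `A`-valued inner product. -/
class RightCStarModule (A : outParam <| Type*) (E : Type*) [NonUnitalSemiring A] [StarRing A]
    [Module ℂ A] [AddCommGroup E] [Module ℂ E] [PartialOrder A] [SMul Aᵐᵒᵖ E] [Norm A] [Norm E]
    extends Inner A E where
  inner_add_right {x} {y} {z} : inner x (y + z) = inner x y + inner x z
  inner_self_nonneg {x} : 0 ≤ inner x x
  inner_self {x} : inner x x = 0 ↔ x = 0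
  inner_op_smul_right {a : A} {x y : E} : inner x (MulOpposite.op a • y) = inner x y * a
  inner_smul_right_complex {z : ℂ} {x} {y} : inner x (z • y) = z • inner x y
  star_inner x y : star (inner x y) = inner y x
  norm_eq_sqrt_norm_inner_self x : ‖x‖ = √‖inner x x‖

/-! Put the positivity hypothesis to work on the concatenated tuple `(a, b) ⊗ (ξ, z η)`: if `a ⊗ ξ`
is null, this gives `0 ≤ z • x + z̄ • y + |z|² • c` for every `z : ℂ`, with `x` the cross pairing.
Letting `z = t w` with `t ↓ 0` (the positive cone is closed) removes the quadratic term, so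
`w • x + w̄ • y` is both `≥ 0` and `≤ 0`; `w = 1` and `w = i` then give `x + y = 0 = x - y`. -/

open Filter Topology

theorem nonneg_of_forall_pos_nonneg_add_smul {E : Type*} [AddCommGroup E] [Module ℝ E]
    [TopologicalSpace E] [ContinuousAdd E] [ContinuousSMul ℝ E] [Preorder E]
    [ClosedIciTopology E] {c d : E} (h : ∀ t : ℝ, 0 < t → 0 ≤ d + t • c) : 0 ≤ d := by
  have hlim : Tendsto (fun t : ℝ => d + t • c) (𝓝[>] 0) (𝓝 d) := by
    have : Tendsto (fun t : ℝ => d + t • c) (𝓝 0) (𝓝 (d + (0 : ℝ) • c)) :=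
      (continuous_const.add (continuous_id.smul continuous_const)).tendsto 0
    simpa using this.mono_left nhdsWithin_le_nhds
  exact ge_of_tendsto hlim (eventually_nhdsWithin_of_forall h)

section CStarAlgebra

variable {B : Type*} [CStarAlgebra B] [PartialOrder B] [StarOrderedRing B]

theorem eq_zero_of_forall_nonneg_smul_add_star_smul_add {x y c : B}
    (h : ∀ z : ℂ, 0 ≤ z • x + star z • y + (star z * z) • c) : x = 0 := by
  have hlin : ∀ w : ℂ, 0 ≤ w • x + star w • y := fun w => by
    refine nonneg_of_forall_pos_nonneg_add_smul (c := (star w * w) • c) fun t ht => ?_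
    rw [← smul_nonneg_iff_nonneg_of_pos_left ht]
    convert h (t * w) using 1
    simp only [star_mul', Complex.star_def, Complex.conj_ofReal]
    match_scalars
    all_goals simp only [Complex.coe_algebraMap]; ring
  have hzero : ∀ w : ℂ, w • x + star w • y = 0 := fun w => by
    refine le_antisymm ?_ (hlin w)
    have := hlin (-w)
    rw [star_neg, neg_smul, neg_smul, ← neg_add, neg_nonneg] at this
    exact this
  have hsum : x + y = 0 := by simpa using hzero 1
  have hdiff : Complex.I • (x - y) = 0 := by
    simpa [smul_sub, sub_eq_add_neg] using hzero Complex.I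
  have hxy : x = y := sub_eq_zero.mp ((smul_eq_zero.mp hdiff).resolve_left Complex.I_ne_zero)
  rw [← hxy, ← two_smul ℂ, smul_eq_zero] at hsum
  exact hsum.resolve_left two_ne_zero

end CStarAlgebra

section RightCStarModule

variable {A B H : Type*} [CStarAlgebra B] [PartialOrder B] [NormedAddCommGroup H]
  [NormedSpace ℂ H] [SMul Bᵐᵒᵖ H] [RightCStarModule B H]

theorem RightCStarModule.inner_smul_left_complex (z : ℂ) (x y : H) :
    (inner B (z • x) y : B) = star z • inner B x y := by
  rw [← star_inner, inner_smul_right_complex, star_smul, star_inner]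

variable [Star A] [Mul A]

/-- The form `⟨Σᵢ aᵢ ⊗ ξᵢ, Σⱼ bⱼ ⊗ ηⱼ⟩` on `A ⊗ H`. -/
def tensorPairing (α : A → A) (φ : A → H →L[ℂ] H) {n m : ℕ} (a : Fin n → A) (ξ : Fin n → H)
    (b : Fin m → A) (η : Fin m → H) : B :=
  ∑ i, ∑ j, inner B (ξ i) (φ (star (α (a i)) * b j) (η j))

theorem tensorPairing_append_smul_self (α : A → A) (φ : A → H →L[ℂ] H) {n m : ℕ}
    (a : Fin n → A) (ξ : Fin n → H) (b : Fin m → A) (η : Fin m → H) (z : ℂ) :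
    tensorPairing (B := B) α φ (Fin.append a b) (Fin.append ξ (z • η)) (Fin.append a b)
        (Fin.append ξ (z • η)) =
      tensorPairing α φ a ξ a ξ + z • tensorPairing α φ a ξ b η +
        star z • tensorPairing α φ b η a ξ + (star z * z) • tensorPairing α φ b η b η := by
  simp only [tensorPairing, Fin.sum_univ_add, Fin.append_left, Fin.append_right, Pi.smul_apply,
    map_smul, RightCStarModule.inner_smul_left_complex, RightCStarModule.inner_smul_right_complex,
    Finset.smul_sum, smul_smul, Finset.sum_add_distrib]
  simp only [mul_comm z]
  abel

end RightCStarModule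

theorem alphaCP_form_positive_and_null_general
    {A B H₁ : Type*}
    [CStarAlgebra A]
    [CStarAlgebra B] [PartialOrder B] [StarOrderedRing B]
    [NormedAddCommGroup H₁] [NormedSpace ℂ H₁] [SMul Bᵐᵒᵖ H₁] [RightCStarModule B H₁]
    (α : A ≃⋆ₐ[ℂ] A)
    (φ : A →ₗ[ℂ] H₁ →L[ℂ] H₁)
    -- condition (ii): positivity of the matrices `[φ(α(aᵢ)* aⱼ)]`
    (hpos : ∀ (n : ℕ) (a : Fin n → A) (ξ : Fin n → H₁),
      0 ≤ ∑ i, ∑ j, (inner B (ξ i) (φ (star (α (a i)) * a j) (ξ j)) : B)) :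
    -- the form is positive semidefinite
    (∀ (n : ℕ) (a : Fin n → A) (ξ : Fin n → H₁),
      0 ≤ ∑ i, ∑ j, (inner B (ξ i) (φ (star (α (a i)) * a j) (ξ j)) : B)) ∧
    -- null tuples are orthogonal to everything (so `N_φ` is a subspace and the
    -- quotient carries a `B`-valued inner product)
    (∀ (n m : ℕ) (a : Fin n → A) (ξ : Fin n → H₁) (b : Fin m → A) (η : Fin m → H₁),
      (∑ i, ∑ j, (inner B (ξ i) (φ (star (α (a i)) * a j) (ξ j)) : B)) = 0 →
      (∑ i, ∑ j, (inner B (ξ i) (φ (star (α (a i)) * b j) (η j)) : B)) = 0) := by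
  refine ⟨hpos, fun n m a ξ b η hnull => ?_⟩
  refine eq_zero_of_forall_nonneg_smul_add_star_smul_add
    (y := tensorPairing α φ b η a ξ) (c := tensorPairing α φ b η b η) fun z => ?_
  have hnull' : tensorPairing (B := B) α φ a ξ a ξ = 0 := hnull
  calc (0 : B)
      ≤ tensorPairing α φ (Fin.append a b) (Fin.append ξ (z • η)) (Fin.append a b)
          (Fin.append ξ (z • η)) := hpos _ _ _
    _ = _ := by rw [tensorPairing_append_smul_self, hnull', zero_add]; rfl

/-- For an `α`-completely positive map `φ : A → L(H₁)` on a Krein `B`-module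
`(H₁, J₁)`, the `B`-valued sesquilinear form
`⟨a ⊗ ξ, b ⊗ η⟩ = ⟨ξ, φ(α(a)* b) η⟩` on `A ⊗ H₁` is positive semidefinite
(evaluated on finite tuples), and any tuple with vanishing self-pairing pairs to
zero with every other tuple — so the null space is a subspace and the quotient
carries a `B`-valued inner product. -/
theorem alphaCP_form_positive_and_null
    {A B H₁ : Type*}
    [CStarAlgebra A] [PartialOrder A] [StarOrderedRing A]
    [CStarAlgebra B] [PartialOrder B] [StarOrderedRing B]
    [NormedAddCommGroup H₁] [NormedSpace ℂ H₁] [SMul Bᵐᵒᵖ H₁] [RightCStarModule B H₁]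
    (α : A ≃⋆ₐ[ℂ] A) (hα : ∀ a : A, α (α a) = a)
    (J₁ : H₁ →L[ℂ] H₁)
    (hJ₁sym : ∀ x y : H₁, (inner B (J₁ x) y : B) = inner B x (J₁ y))
    (hJ₁2 : ∀ x : H₁, J₁ (J₁ x) = x)
    (φ : A →ₗ[ℂ] H₁ →L[ℂ] H₁)
    (hφstar : ∀ (a : A) (ξ η : H₁),
      (inner B (φ a ξ) η : B) = inner B ξ (φ (star a) η))
    (hφα : ∀ a : A, φ (α a) = φ a)
    (hφJ : ∀ (a : A) (ξ : H₁), J₁ (φ a (J₁ ξ)) = φ a ξ)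
    -- condition (ii): positivity of the matrices `[φ(α(aᵢ)* aⱼ)]`
    (hpos : ∀ (n : ℕ) (a : Fin n → A) (ξ : Fin n → H₁),
      0 ≤ ∑ i, ∑ j, (inner B (ξ i) (φ (star (α (a i)) * a j) (ξ j)) : B)) :
    -- the form is positive semidefinite
    (∀ (n : ℕ) (a : Fin n → A) (ξ : Fin n → H₁),
      0 ≤ ∑ i, ∑ j, (inner B (ξ i) (φ (star (α (a i)) * a j) (ξ j)) : B)) ∧
    -- null tuples are orthogonal to everything (so `N_φ` is a subspace and the
    -- quotient carries a `B`-valued inner product)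
    (∀ (n m : ℕ) (a : Fin n → A) (ξ : Fin n → H₁) (b : Fin m → A) (η : Fin m → H₁),
      (∑ i, ∑ j, (inner B (ξ i) (φ (star (α (a i)) * a j) (ξ j)) : B)) = 0 →
      (∑ i, ∑ j, (inner B (ξ i) (φ (star (α (a i)) * b j) (η j)) : B)) = 0) :=
  alphaCP_form_positive_and_null_general α φ hpos
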